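/- arXiv:1509.03697 — 3 statements merged into one kernel-verified Lean document; each statement's English description precedes it below -/
import Mathlib

section
/- The matrix identity I_n − X A_τ⁻¹ Xᵀ = (I_n + X D_τ Xᵀ)⁻¹ holds; in particular I_n − X A_τ⁻¹ Xᵀ is symmetric positive definite, so the quantity C_τ = Ỹᵀ(I_n − X A_τ⁻¹ Xᵀ)Ỹ is strictly positive whenever Ỹ ≠ 0. -/
open Matrix

/-- `D_τ⁻¹ = diag(τ₁,…,τ_p)⁻¹`. -/
noncomputable def Dinv (p : ℕ) (τ : Fin p → ℝ) : Matrix (Fin p) (Fin p) ℝ :=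
  Matrix.diagonal fun j => (τ j)⁻¹

/-- `A_τ = XᵀX + D_τ⁻¹`. -/
noncomputable def Amat (n p : ℕ) (X : Matrix (Fin n) (Fin p) ℝ) (τ : Fin p → ℝ) :
    Matrix (Fin p) (Fin p) ℝ :=
  Xᵀ * X + Dinv p τ

/-!
`I - X A_τ⁻¹ Xᵀ = (I + X D_τ Xᵀ)⁻¹` is the Woodbury identity for the positive definite
`D_τ`. Since `I + X D_τ Xᵀ` is positive definite, so is its inverse, which gives `C_τ > 0`.
-/

namespace Matrix

variable {K : Type*} [Field K] [PartialOrder K] [StarRing K] [StarOrderedRing K]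
  {m k : Type*} [Fintype m] [Fintype k]

theorem PosDef.conjTranspose_mul_self_add_inv [DecidableEq k] {D : Matrix k k K}
    (hD : D.PosDef) (X : Matrix m k K) : (Xᴴ * X + D⁻¹).PosDef :=
  PosDef.posSemidef_add (posSemidef_conjTranspose_mul_self X) hD.inv

theorem PosSemidef.one_add_mul_mul_conjTranspose [DecidableEq m] {D : Matrix k k K}
    (hD : D.PosSemidef) (X : Matrix m k K) : (1 + X * D * Xᴴ).PosDef :=
  PosDef.one.add_posSemidef (hD.mul_mul_conjTranspose_same X)

theorem PosDef.one_sub_mul_inv_mul_conjTranspose [DecidableEq m] [DecidableEq k]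
    {D : Matrix k k K} (hD : D.PosDef) (X : Matrix m k K) :
    1 - X * (Xᴴ * X + D⁻¹)⁻¹ * Xᴴ = (1 + X * D * Xᴴ)⁻¹ := by
  have hA := (hD.conjTranspose_mul_self_add_inv X).isUnit
  rw [add_mul_mul_inv_eq_sub _ _ _ _ isUnit_one hD.isUnit (by simpa [add_comm] using hA)]
  simp [add_comm]

end Matrix

theorem Dinv_eq_inv_diagonal {p : ℕ} {τ : Fin p → ℝ} (hτ : ∀ j, τ j ≠ 0) :
    Dinv p τ = (diagonal τ)⁻¹ :=
  (inv_eq_left_inv <| by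
    simp only [Dinv, diagonal_mul_diagonal, inv_mul_cancel₀ (hτ _), diagonal_one]).symm

theorem residual_matrix_identity_general
    (n p : ℕ)
    (X : Matrix (Fin n) (Fin p) ℝ) (Y : Fin n → ℝ)
    (τ : Fin p → ℝ) (hτ : ∀ j, 0 < τ j) :
    (1 - X * (Amat n p X τ)⁻¹ * Xᵀ) = (1 + X * Matrix.diagonal τ * Xᵀ)⁻¹
    ∧ (1 - X * (Amat n p X τ)⁻¹ * Xᵀ).PosDef
    ∧ (Y ≠ 0 → 0 < Y ⬝ᵥ ((1 - X * (Amat n p X τ)⁻¹ * Xᵀ) *ᵥ Y)) := by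
  have hD : (diagonal τ).PosDef := PosDef.diagonal hτ
  have hidentity : 1 - X * (Amat n p X τ)⁻¹ * Xᵀ = (1 + X * diagonal τ * Xᵀ)⁻¹ := by
    simpa [Amat, Dinv_eq_inv_diagonal fun j => (hτ j).ne'] using
      hD.one_sub_mul_inv_mul_conjTranspose X
  have hposDef : (1 - X * (Amat n p X τ)⁻¹ * Xᵀ).PosDef := by
    simpa [hidentity] using (hD.posSemidef.one_add_mul_mul_conjTranspose X).inv
  exact ⟨hidentity, hposDef, fun hY => by simpa using hposDef.dotProduct_mulVec_pos hY⟩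

/-- `I_n − X A_τ⁻¹ Xᵀ = (I_n + X D_τ Xᵀ)⁻¹`; in particular this matrix is
symmetric positive definite, so `C_τ = Ỹᵀ(I_n − X A_τ⁻¹ Xᵀ)Ỹ > 0` whenever `Ỹ ≠ 0`. -/
theorem residual_matrix_identity
    (n p : ℕ) (hn : 0 < n) (hp : 0 < p)
    (X : Matrix (Fin n) (Fin p) ℝ) (Y : Fin n → ℝ)
    (τ : Fin p → ℝ) (hτ : ∀ j, 0 < τ j) :
    (1 - X * (Amat n p X τ)⁻¹ * Xᵀ) = (1 + X * Matrix.diagonal τ * Xᵀ)⁻¹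
    ∧ (1 - X * (Amat n p X τ)⁻¹ * Xᵀ).PosDef
    ∧ (Y ≠ 0 → 0 < Y ⬝ᵥ ((1 - X * (Amat n p X τ)⁻¹ * Xᵀ) *ᵥ Y)) :=
  residual_matrix_identity_general n p X Y τ hτ
end

section
/- Multivariate Student-t normalization: let M be a symmetric positive definite real p×p matrix, m ∈ ℝ^p, c > 0 and ν > 0. Then the integral over x ∈ ℝ^p of [c + (x − m)ᵀ M (x − m)]^{−(ν+p)/2} with respect to Lebesgue measure equals Γ(ν/2) · π^{p/2} · det(M)^{−1/2} / (Γ((ν+p)/2) · c^{ν/2}). -/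
/-!
Write `Γ(s) (c + q)^(-s) = ∫₀^∞ t^(s-1) e^(-(c+q)t) dt` and exchange the order of integration:
for `q = x ⬝ᵥ x` the inner integrals are Gaussian, `∫ e^(-t x ⬝ᵥ x) dx = (π/t)^(p/2)`, and what
is left is again a Gamma integral, `∫₀^∞ t^(s-p/2-1) e^(-ct) dt = Γ(s-p/2) c^(p/2-s)`.
A general positive definite form reduces to `x ⬝ᵥ x` by translating by `m` and substituting
`y = B x`, where `M = Bᵀ B`.
-/

open Matrix MeasureTheory Real Set

lemma exp_neg_add_mul (c q t : ℝ) : exp (-((c + q) * t)) = exp (-(c * t)) * exp (-(t * q)) := by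
  rw [← exp_add]; ring_nf

theorem Gamma_mul_integral_rpow_neg_add {α : Type*} [MeasurableSpace α] {μ : Measure α}
    [SFinite μ] {q : α → ℝ} (hq : ∀ x, 0 ≤ q x) {c s : ℝ} (hc : 0 < c) (hs : 0 < s)
    (hint : Integrable (fun z : α × ℝ => z.2 ^ (s - 1) * exp (-((c + q z.1) * z.2)))
      (μ.prod (volume.restrict (Ioi 0)))) :
    Gamma s * ∫ x, (c + q x) ^ (-s) ∂μ =
      ∫ t in Ioi 0, ∫ x, t ^ (s - 1) * exp (-((c + q x) * t)) ∂μ := by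
  have hGamma (x : α) :
      ∫ t in Ioi 0, t ^ (s - 1) * exp (-((c + q x) * t)) = Gamma s * (c + q x) ^ (-s) := by
    have hx : 0 < c + q x := by linarith [hq x]
    rw [integral_rpow_mul_exp_neg_mul_Ioi hs hx, one_div, inv_rpow hx.le, ← rpow_neg hx.le,
      mul_comm]
  rw [← integral_const_mul, ← integral_integral_swap hint]
  simp_rw [hGamma]

section DotProduct

variable {ι : Type*} [Fintype ι]

lemma dotProduct_self_nonneg (x : ι → ℝ) : 0 ≤ x ⬝ᵥ x :=
  Finset.sum_nonneg fun i _ => mul_self_nonneg (x i)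

lemma exp_neg_mul_dotProduct_self (t : ℝ) (x : ι → ℝ) :
    exp (-(t * (x ⬝ᵥ x))) = ∏ i, exp (-t * x i ^ 2) := by
  rw [← exp_sum, dotProduct, Finset.mul_sum, ← Finset.sum_neg_distrib]
  congr 1
  exact Finset.sum_congr rfl fun i _ => by ring

lemma integrable_exp_neg_mul_dotProduct_self {t : ℝ} (ht : 0 < t) :
    Integrable (fun x : ι → ℝ => exp (-(t * (x ⬝ᵥ x)))) := by
  simp_rw [exp_neg_mul_dotProduct_self]
  exact Integrable.fintype_prod (f := fun _ y => exp (-t * y ^ 2))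
    fun _ => integrable_exp_neg_mul_sq ht

lemma integral_exp_neg_mul_dotProduct_self {t : ℝ} (ht : 0 < t) :
    ∫ x : ι → ℝ, exp (-(t * (x ⬝ᵥ x))) = (π / t) ^ ((Fintype.card ι : ℝ) / 2) := by
  simp_rw [exp_neg_mul_dotProduct_self]
  rw [volume_pi, integral_fintype_prod_eq_pow (fun y : ℝ => exp (-t * y ^ 2)), integral_gaussian,
    sqrt_eq_rpow, ← rpow_natCast, ← rpow_mul (by positivity)]
  ring_nf

lemma integral_rpow_mul_exp_neg_add_dotProduct_self {c t : ℝ} (ht : 0 < t) (s : ℝ) :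
    ∫ x : ι → ℝ, t ^ (s - 1) * exp (-((c + x ⬝ᵥ x) * t)) =
      π ^ ((Fintype.card ι : ℝ) / 2) * (t ^ (s - Fintype.card ι / 2 - 1) * exp (-(c * t))) := by
  simp_rw [exp_neg_add_mul, ← mul_assoc]
  rw [integral_const_mul, integral_exp_neg_mul_dotProduct_self ht, div_rpow pi_pos.le ht.le,
    sub_right_comm s, rpow_sub ht (s - 1)]
  ring

lemma integrable_rpow_mul_exp_neg_add_dotProduct_self {c s : ℝ} (hc : 0 < c)
    (hs : (Fintype.card ι : ℝ) / 2 < s) :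
    Integrable (fun z : (ι → ℝ) × ℝ => z.2 ^ (s - 1) * exp (-((c + z.1 ⬝ᵥ z.1) * z.2)))
      (volume.prod (volume.restrict (Ioi 0))) := by
  rw [integrable_prod_iff' (by fun_prop : Measurable _).aestronglyMeasurable]
  constructor
  · filter_upwards [ae_restrict_mem measurableSet_Ioi] with t ht
    simp_rw [exp_neg_add_mul, ← mul_assoc]
    exact (integrable_exp_neg_mul_dotProduct_self ht).const_mul _
  · have hGamma := integrableOn_rpow_mul_exp_neg_mul_rpow (s := s - Fintype.card ι / 2 - 1)
      (p := 1) (by linarith) one_pos hc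
    simp only [rpow_one, neg_mul] at hGamma
    refine (hGamma.const_mul (π ^ ((Fintype.card ι : ℝ) / 2))).congr ?_
    filter_upwards [ae_restrict_mem measurableSet_Ioi] with t ht
    rw [← integral_rpow_mul_exp_neg_add_dotProduct_self ht]
    exact integral_congr_ae (.of_forall fun x =>
      (norm_of_nonneg (mul_nonneg (rpow_nonneg (le_of_lt ht) _) (exp_nonneg _))).symm)

theorem integral_rpow_neg_add_dotProduct_self {c s : ℝ} (hc : 0 < c)
    (hs : (Fintype.card ι : ℝ) / 2 < s) :
    ∫ x : ι → ℝ, (c + x ⬝ᵥ x) ^ (-s) =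
      π ^ ((Fintype.card ι : ℝ) / 2) * Gamma (s - Fintype.card ι / 2) /
        (Gamma s * c ^ (s - Fintype.card ι / 2)) := by
  have hs₀ : 0 < s := lt_of_le_of_lt (by positivity) hs
  have h := Gamma_mul_integral_rpow_neg_add (μ := volume) dotProduct_self_nonneg hc hs₀
    (integrable_rpow_mul_exp_neg_add_dotProduct_self hc hs)
  rw [setIntegral_congr_fun measurableSet_Ioi
      fun t ht => integral_rpow_mul_exp_neg_add_dotProduct_self ht s,
    integral_const_mul, integral_rpow_mul_exp_neg_mul_Ioi (by linarith) hc, one_div,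
    inv_rpow hc.le] at h
  have hGamma : 0 < Gamma s := Gamma_pos_of_pos hs₀
  field_simp at h ⊢
  linarith

theorem integral_comp_mulVec {E : Type*} [NormedAddCommGroup E] [NormedSpace ℝ E] [DecidableEq ι]
    {B : Matrix ι ι ℝ} (hB : B.det ≠ 0) (f : (ι → ℝ) → E) :
    ∫ x, f (B *ᵥ x) = |B.det|⁻¹ • ∫ y, f y := by
  have hinj : Function.Injective (toLin' B) :=
    mulVec_injective_iff_isUnit.mpr ((isUnit_iff_isUnit_det B).mpr hB.isUnit)
  have hemb : MeasurableEmbedding (toLin' B) :=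
    (LinearMap.isClosedEmbedding_of_injective (LinearMap.ker_eq_bot.mpr hinj)).measurableEmbedding
  calc ∫ x, f (B *ᵥ x) = ∫ y, f y ∂(Measure.map (toLin' B) volume) := (hemb.integral_map f).symm
    _ = |B.det|⁻¹ • ∫ y, f y := by
      rw [map_matrix_volume_pi_eq_smul_volume_pi hB, integral_smul_measure,
        ENNReal.toReal_ofReal (abs_nonneg _), abs_inv]

theorem integral_comp_dotProduct_mulVec_of_posDef {E : Type*} [NormedAddCommGroup E]
    [NormedSpace ℝ E] [DecidableEq ι] {M : Matrix ι ι ℝ} (hM : M.PosDef) (f : ℝ → E) :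
    ∫ x : ι → ℝ, f (x ⬝ᵥ (M *ᵥ x)) = M.det ^ (-(1 : ℝ) / 2) • ∫ y : ι → ℝ, f (y ⬝ᵥ y) := by
  obtain ⟨B, hB, rfl⟩ : ∃ B : Matrix ι ι ℝ, IsUnit B ∧ M = Bᵀ * B := by
    open scoped MatrixOrder in
    obtain ⟨B, hB, rfl⟩ :=
      CStarAlgebra.isStrictlyPositive_iff_eq_star_mul_self.mp hM.isStrictlyPositive
    exact ⟨B, hB, rfl⟩
  have hquad (x : ι → ℝ) : x ⬝ᵥ ((Bᵀ * B) *ᵥ x) = (B *ᵥ x) ⬝ᵥ (B *ᵥ x) := by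
    rw [← mulVec_mulVec, dotProduct_mulVec, vecMul_transpose]
  have hdet : (Bᵀ * B).det ^ (-(1 : ℝ) / 2) = |B.det|⁻¹ := by
    rw [det_mul, det_transpose, ← abs_mul_abs_self, ← sq, ← rpow_natCast,
      ← rpow_mul (abs_nonneg _)]
    norm_num [rpow_neg_one]
  simp_rw [hquad, hdet]
  exact integral_comp_mulVec ((isUnit_iff_isUnit_det B).mp hB).ne_zero (fun y => f (y ⬝ᵥ y))

end DotProduct

theorem student_t_normalization_general
    (p : ℕ)
    (M : Matrix (Fin p) (Fin p) ℝ) (hM : M.PosDef)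
    (m : Fin p → ℝ) (c ν : ℝ) (hc : 0 < c) (hν : 0 < ν) :
    (∫ x : Fin p → ℝ,
        (c + (x - m) ⬝ᵥ (M *ᵥ (x - m))) ^ (-(ν + p) / 2))
    = Real.Gamma (ν / 2) * Real.pi ^ ((p : ℝ) / 2) * M.det ^ (-(1 : ℝ) / 2)
        / (Real.Gamma ((ν + p) / 2) * c ^ (ν / 2)) := by
  have hs : (Fintype.card (Fin p) : ℝ) / 2 < (ν + p) / 2 := by
    rw [Fintype.card_fin]; linarith
  rw [integral_sub_right_eq_self (fun y => (c + y ⬝ᵥ (M *ᵥ y)) ^ (-(ν + p) / 2)) m,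
    integral_comp_dotProduct_mulVec_of_posDef hM (fun q => (c + q) ^ (-(ν + p) / 2)),
    neg_div (2 : ℝ) (ν + p), integral_rpow_neg_add_dotProduct_self hc hs, Fintype.card_fin,
    smul_eq_mul, show (ν + p) / 2 - p / 2 = ν / 2 by ring]
  ring

/-- multivariate Student-t normalization. For a symmetric positive
definite `p×p` matrix `M`, `m ∈ ℝ^p`, `c > 0`, `ν > 0`,
`∫_{ℝ^p} [c + (x−m)ᵀ M (x−m)]^{−(ν+p)/2} dx
   = Γ(ν/2) π^{p/2} det(M)^{−1/2} / (Γ((ν+p)/2) c^{ν/2})`. -/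
theorem student_t_normalization
    (p : ℕ) (hp : 0 < p)
    (M : Matrix (Fin p) (Fin p) ℝ) (hM : M.PosDef)
    (m : Fin p → ℝ) (c ν : ℝ) (hc : 0 < c) (hν : 0 < ν) :
    (∫ x : Fin p → ℝ,
        (c + (x - m) ⬝ᵥ (M *ᵥ (x - m))) ^ (-(ν + p) / 2))
    = Real.Gamma (ν / 2) * Real.pi ^ ((p : ℝ) / 2) * M.det ^ (-(1 : ℝ) / 2)
        / (Real.Gamma ((ν + p) / 2) * c ^ (ν / 2)) :=
  student_t_normalization_general p M hM m c ν hc hν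
end

section
/- For every λ > 0, the integral over τ ∈ (0,∞)^p of det(XᵀX + D_τ⁻¹)^{1/2} · exp(−(λ²/6)(τ₁ + ⋯ + τ_p)) with respect to Lebesgue measure on (0,∞)^p is finite. -/
/-!
For `τ > 0` write `XᵀX + D_τ⁻¹ = D_τ⁻¹ (1 + D_τ XᵀX)`; by Sylvester's identity
`det (1 + D_τ XᵀX) = det (1 + X D_τ Xᵀ)`, and `X D_τ Xᵀ` is positive semidefinite with trace at most
`tr (XᵀX) ∑ τⱼ`. Bounding a positive semidefinite determinant by a power of its trace, the determinant
is at most `∏ τⱼ⁻¹` times a polynomial in `∑ τⱼ`, and that polynomial is `O(exp (ε ∑ τⱼ))` for every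
`ε > 0`. With `ε = λ²/6` the integrand is dominated by `C ∏ τⱼ^(-1/2) exp (-(λ²/12) τⱼ)`, a product of
integrable functions of one variable.
-/

open Matrix MeasureTheory Real

namespace Matrix

variable {m k : Type*} [Fintype m] [Fintype k]

theorem PosSemidef.det_le_trace_pow [DecidableEq m] {A : Matrix m m ℝ} (hA : A.PosSemidef) :
    A.det ≤ A.trace ^ Fintype.card m := by
  have hev := hA.eigenvalues_nonneg
  rw [hA.isHermitian.det_eq_prod_eigenvalues, hA.isHermitian.trace_eq_sum_eigenvalues,
    ← Finset.card_univ, ← Finset.prod_const]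
  exact Finset.prod_le_prod (fun i _ ↦ hev i)
    fun i _ ↦ Finset.single_le_sum (fun j _ ↦ hev j) (Finset.mem_univ i)

theorem PosSemidef.trace_diagonal_mul_le [DecidableEq k] {A : Matrix k k ℝ} (hA : A.PosSemidef)
    {d : k → ℝ} (hd : 0 ≤ d) : (diagonal d * A).trace ≤ (∑ j, d j) * A.trace := by
  rw [trace, trace, Finset.mul_sum]
  refine Finset.sum_le_sum fun j _ ↦ ?_
  rw [diag_apply, diag_apply, diagonal_mul]
  exact mul_le_mul_of_nonneg_right (Finset.single_le_sum (fun i _ ↦ hd i) (Finset.mem_univ j))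
    hA.diag_nonneg

theorem posSemidef_transpose_mul_self (X : Matrix m k ℝ) : (Xᵀ * X).PosSemidef := by
  simpa using posSemidef_conjTranspose_mul_self X

theorem det_transpose_mul_add_diagonal_inv {K : Type*} [Field K] [DecidableEq m] [DecidableEq k]
    (X : Matrix m k K) {d : k → K} (hd : ∀ j, d j ≠ 0) :
    (Xᵀ * X + diagonal fun j ↦ (d j)⁻¹).det = (∏ j, (d j)⁻¹) * (1 + X * diagonal d * Xᵀ).det := by
  have hfactor : Xᵀ * X + (diagonal fun j ↦ (d j)⁻¹) =
      (diagonal fun j ↦ (d j)⁻¹) * (1 + (diagonal d * Xᵀ) * X) := by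
    rw [mul_add, mul_one, ← Matrix.mul_assoc, ← Matrix.mul_assoc, diagonal_mul_diagonal]
    simp [inv_mul_cancel₀ (hd _), add_comm]
  rw [hfactor, det_mul, det_diagonal, det_one_add_mul_comm, Matrix.mul_assoc]

end Matrix

section

variable {m : Type*} [Fintype m] [DecidableEq m] {p : ℕ}

theorem det_transpose_mul_add_Dinv_le (X : Matrix m (Fin p) ℝ) {τ : Fin p → ℝ}
    (hτ : ∀ j, 0 < τ j) :
    (Xᵀ * X + Dinv p τ).det
      ≤ (∏ j, (τ j)⁻¹) * (Fintype.card m + (Xᵀ * X).trace * ∑ j, τ j) ^ Fintype.card m := by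
  rw [Dinv, det_transpose_mul_add_diagonal_inv X fun j ↦ (hτ j).ne']
  have hM : (X * diagonal τ * Xᵀ).PosSemidef := by
    simpa using (posSemidef_diagonal_iff.2 fun j ↦ (hτ j).le).mul_mul_conjTranspose_same X
  have htrace : (X * diagonal τ * Xᵀ).trace ≤ (∑ j, τ j) * (Xᵀ * X).trace := by
    rw [trace_mul_cycle, trace_mul_comm]
    exact (posSemidef_transpose_mul_self X).trace_diagonal_mul_le fun j ↦ (hτ j).le
  have h1M := PosSemidef.one.add hM
  gcongr
  · exact Finset.prod_nonneg fun j _ ↦ (inv_pos.2 (hτ j)).le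
  refine h1M.det_le_trace_pow.trans ?_
  gcongr
  · exact h1M.trace_nonneg
  rw [trace_add, trace_one]
  linarith

theorem sqrt_det_transpose_mul_add_Dinv_mul_exp_le (X : Matrix m (Fin p) ℝ) {a K : ℝ}
    (hK : ∀ s, 0 ≤ s →
      (Fintype.card m + (Xᵀ * X).trace * s) ^ Fintype.card m ≤ K * exp (a * s))
    {τ : Fin p → ℝ} (hτ : ∀ j, 0 < τ j) :
    √(Xᵀ * X + Dinv p τ).det * exp (-a * ∑ j, τ j)
      ≤ √K * ∏ j, (√(τ j))⁻¹ * exp (-(a / 2) * τ j) := by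
  have hinv : ∀ j, 0 ≤ (τ j)⁻¹ := fun j ↦ (inv_pos.2 (hτ j)).le
  have hprod : 0 ≤ ∏ j, (τ j)⁻¹ := Finset.prod_nonneg fun j _ ↦ hinv j
  set s := ∑ j, τ j with hs
  have hdet : (Xᵀ * X + Dinv p τ).det ≤ K * ((∏ j, (τ j)⁻¹) * exp (a * s)) :=
    calc _ ≤ _ := det_transpose_mul_add_Dinv_le X hτ
      _ ≤ (∏ j, (τ j)⁻¹) * (K * exp (a * s)) := by
          gcongr
          exact hK s (Finset.sum_nonneg fun j _ ↦ (hτ j).le)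
      _ = _ := by ring
  have hexp : √(exp (a * s)) * exp (-a * s) = ∏ j, exp (-(a / 2) * τ j) := by
    rw [← exp_half, ← exp_add, ← exp_sum, ← Finset.mul_sum, ← hs]
    ring_nf
  calc √(Xᵀ * X + Dinv p τ).det * exp (-a * s)
      ≤ √(K * ((∏ j, (τ j)⁻¹) * exp (a * s))) * exp (-a * s) := by gcongr
    _ = √K * ((∏ j, (√(τ j))⁻¹) * (√(exp (a * s)) * exp (-a * s))) := by
        rw [sqrt_mul' _ (mul_nonneg hprod (exp_pos _).le), sqrt_mul hprod,
          sqrt_prod _ fun j _ ↦ hinv j]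
        simp only [sqrt_inv]
        ring
    _ = _ := by rw [hexp, Finset.prod_mul_distrib]

end

theorem exists_add_mul_pow_le_mul_exp {b c ε : ℝ} (hb : 0 ≤ b) (hc : 0 ≤ c) (hε : 0 < ε) (k : ℕ) :
    ∃ K, ∀ s, 0 ≤ s → (b + c * s) ^ k ≤ K * exp (ε * s) := by
  set δ := ε / (k + 1)
  have hδ : 0 < δ := by positivity
  refine ⟨(b + c / δ) ^ k, fun s hs ↦ ?_⟩
  have hlin : b + c * s ≤ (b + c / δ) * exp (δ * s) := by
    have h1 : 1 ≤ exp (δ * s) := one_le_exp (by positivity)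
    have h2 : δ * s ≤ exp (δ * s) := by linarith [add_one_le_exp (δ * s)]
    calc b + c * s = b * 1 + c / δ * (δ * s) := by field_simp
      _ ≤ b * exp (δ * s) + c / δ * exp (δ * s) := by gcongr
      _ = _ := by ring
  have hkδ : k * δ ≤ ε := by
    rw [mul_div_assoc', div_le_iff₀ (by positivity)]
    nlinarith
  calc (b + c * s) ^ k ≤ ((b + c / δ) * exp (δ * s)) ^ k := by gcongr
    _ = (b + c / δ) ^ k * exp (k * δ * s) := by rw [mul_pow, ← exp_nat_mul, mul_assoc]
    _ ≤ _ := by gcongr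

theorem integrableOn_inv_sqrt_mul_exp_neg_mul {b : ℝ} (hb : 0 < b) :
    IntegrableOn (fun t ↦ (√t)⁻¹ * exp (-b * t)) (Set.Ioi 0) := by
  refine (integrableOn_rpow_mul_exp_neg_mul_rpow (p := 1) (s := -(1 / 2)) (by norm_num)
    one_pos hb).congr_fun (fun t ht ↦ ?_) measurableSet_Ioi
  dsimp only
  rw [rpow_one, rpow_neg (le_of_lt ht), ← sqrt_eq_rpow]

theorem det_integral_finite_general
    (n p : ℕ)
    (X : Matrix (Fin n) (Fin p) ℝ)
    (l : ℝ) (hl : 0 < l) :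
    (∫⁻ τ in {τ : Fin p → ℝ | ∀ j, 0 < τ j},
        ENNReal.ofReal ((Xᵀ * X + Dinv p τ).det ^ ((1 : ℝ) / 2)
          * Real.exp (-(l ^ 2 / 6) * ∑ j, τ j))) < ⊤ := by
  set a := l ^ 2 / 6
  have ha : 0 < a := by positivity
  obtain ⟨K, hK⟩ := exists_add_mul_pow_le_mul_exp (Nat.cast_nonneg (Fintype.card (Fin n)))
    (posSemidef_transpose_mul_self X).trace_nonneg ha (Fintype.card (Fin n))
  have horthant : {τ : Fin p → ℝ | ∀ j, 0 < τ j} = Set.univ.pi fun _ ↦ Set.Ioi 0 := by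
    ext; simp
  have hbound : Integrable (fun τ : Fin p → ℝ ↦ √K * ∏ j, (√(τ j))⁻¹ * exp (-(a / 2) * τ j))
      (volume.restrict {τ | ∀ j, 0 < τ j}) := by
    rw [horthant, volume_pi, Measure.restrict_pi_pi]
    exact (Integrable.fintype_prod fun _ ↦
      integrableOn_inv_sqrt_mul_exp_neg_mul (half_pos ha)).const_mul _
  refine lt_of_le_of_lt (setLIntegral_mono' ?_ fun τ hτ ↦ ENNReal.ofReal_le_ofReal ?_)
    hbound.lintegral_lt_top
  · rw [horthant]
    exact MeasurableSet.univ_pi fun _ ↦ measurableSet_Ioi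
  · rw [← sqrt_eq_rpow]
    exact sqrt_det_transpose_mul_add_Dinv_mul_exp_le X hK hτ

/-- for every `λ > 0`, the integral over `τ ∈ (0,∞)^p` of
`det(XᵀX + D_τ⁻¹)^{1/2} exp(−(λ²/6)(τ₁+⋯+τ_p))` is finite. -/
theorem det_integral_finite
    (n p : ℕ) (hn : 0 < n) (hp : 0 < p)
    (X : Matrix (Fin n) (Fin p) ℝ)
    (l : ℝ) (hl : 0 < l) :
    (∫⁻ τ in {τ : Fin p → ℝ | ∀ j, 0 < τ j},
        ENNReal.ofReal ((Xᵀ * X + Dinv p τ).det ^ ((1 : ℝ) / 2)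
          * Real.exp (-(l ^ 2 / 6) * ∑ j, τ j))) < ⊤ :=
  det_integral_finite_general n p X l hl
end
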